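/- For every integer m and every natural number s, ∑_{a+b=s, a,b ∈ ℕ} (−1)^b q^{−b} [m+a choose a]_q [m choose b]_q = q^{m·s} in K = ℚ(q). (Lemma 'A'.) -/

import Mathlib

open scoped BigOperators

/-- The variable `q` in the field `K = ℚ(q)` of rational functions. -/
noncomputable def q : RatFunc ℚ := RatFunc.X

/-- The balanced quantum integer `[n]_q = (q^n − q^{−n})/(q − q⁻¹)`. -/
noncomputable def qint (n : ℤ) : RatFunc ℚ := (q ^ n - q ^ (-n)) / (q - q⁻¹)

/-- The quantum factorial `[s]_q! = ∏_{i=1}^s [i]_q`. -/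
noncomputable def qfact (s : ℕ) : RatFunc ℚ := ∏ i ∈ Finset.range s, qint ((i : ℤ) + 1)

/-- The balanced quantum binomial coefficient
`[m choose s]_q = ([m]_q [m−1]_q ⋯ [m−s+1]_q)/[s]_q!`. -/
noncomputable def qbinom (m : ℤ) (s : ℕ) : RatFunc ℚ :=
  (∏ i ∈ Finset.range s, qint (m - (i : ℤ))) / qfact s

lemma q_ne : q ≠ 0 := RatFunc.X_ne_zero

lemma q_pow_ne_one {n : ℕ} (hn : n ≠ 0) : q ^ n ≠ 1 := by
  intro h
  have h2 : (algebraMap (Polynomial ℚ) (RatFunc ℚ)) (Polynomial.X ^ n) =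
      (algebraMap (Polynomial ℚ) (RatFunc ℚ)) 1 := by
    simpa [q, map_pow] using h
  have h3 := RatFunc.algebraMap_injective ℚ h2
  have := congrArg (Polynomial.eval 0) h3
  simp [hn] at this

lemma q_zpow_inj {a b : ℤ} (h : q ^ a = q ^ b) : a = b := by
  by_contra hne
  wlog hlt : b < a generalizing a b
  · exact this h.symm (Ne.symm hne) (by omega)
  have h1 : q ^ (a - b) = 1 := by
    rw [sub_eq_add_neg, zpow_add₀ q_ne, h, ← zpow_add₀ q_ne]
    simp
  have h2 : q ^ ((a - b).toNat) = 1 := by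
    rw [← zpow_natCast, Int.toNat_of_nonneg (by omega)]; exact h1
  exact q_pow_ne_one (by omega) h2

lemma qint_zero : qint 0 = 0 := by simp [qint]

lemma qint_ne_zero {n : ℤ} (hn : n ≠ 0) : qint n ≠ 0 := by
  have hnum : q ^ n - q ^ (-n) ≠ 0 := by
    intro h
    have : q ^ n = q ^ (-n) := by linear_combination h
    have := q_zpow_inj this
    omega
  have hden : q - q⁻¹ ≠ 0 := by
    intro h
    have : q ^ (1:ℤ) = q ^ (-1:ℤ) := by
      simpa [zpow_neg, zpow_one] using sub_eq_zero.mp h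
    have := q_zpow_inj this
    omega
  exact div_ne_zero hnum hden

-- addition formulas
lemma qint_add (x y : ℤ) : qint (x + y) = q ^ y * qint x + q ^ (-x) * qint y := by
  unfold qint
  rw [← mul_div_assoc, ← mul_div_assoc, ← add_div]
  congr 1
  rw [neg_add, zpow_add₀ q_ne, zpow_add₀ q_ne]
  ring

lemma qint_add' (x y : ℤ) : qint (x + y) = q ^ (-y) * qint x + q ^ x * qint y := by
  unfold qint
  rw [← mul_div_assoc, ← mul_div_assoc, ← add_div]
  congr 1
  rw [neg_add, zpow_add₀ q_ne, zpow_add₀ q_ne]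
  ring

lemma qfact_ne_zero (s : ℕ) : qfact s ≠ 0 := by
  unfold qfact
  apply Finset.prod_ne_zero_iff.mpr
  intro i _
  exact qint_ne_zero (by omega)

lemma qfact_succ (k : ℕ) : qfact (k+1) = qfact k * qint ((k:ℤ)+1) := by
  unfold qfact
  rw [Finset.prod_range_succ]

lemma prod_front (n : ℤ) (k : ℕ) :
    ∏ i ∈ Finset.range (k+1), qint (n - (i:ℤ)) =
      qint n * ∏ i ∈ Finset.range k, qint ((n-1) - (i:ℤ)) := by
  rw [Finset.prod_range_succ']
  simp only [Nat.cast_zero, sub_zero, Nat.cast_add, Nat.cast_one]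
  rw [mul_comm]
  congr 1
  apply Finset.prod_congr rfl
  intro i _
  congr 1
  ring

lemma qbinom_zero (m : ℤ) : qbinom m 0 = 1 := by simp [qbinom, qfact]

lemma pascal1 (n : ℤ) (k : ℕ) :
    qbinom n (k+1) = q ^ (-((k:ℤ)+1)) * qbinom (n-1) (k+1)
      + q ^ (n-(k:ℤ)-1) * qbinom (n-1) k := by
  have hk1 : qint ((k:ℤ)+1) ≠ 0 := qint_ne_zero (by omega)
  have hFk : qfact k ≠ 0 := qfact_ne_zero k
  have hFk1 : qfact (k+1) ≠ 0 := qfact_ne_zero (k+1)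
  set P : RatFunc ℚ := ∏ i ∈ Finset.range k, qint ((n-1) - (i:ℤ)) with hP
  have e1 : qbinom n (k+1) = qint n * P / qfact (k+1) := by
    unfold qbinom; rw [prod_front]
  have e2 : qbinom (n-1) (k+1) = P * qint (n-1-(k:ℤ)) / qfact (k+1) := by
    unfold qbinom; rw [Finset.prod_range_succ]
  have e3 : qbinom (n-1) k = qint ((k:ℤ)+1) * P / qfact (k+1) := by
    unfold qbinom
    rw [qfact_succ, ← hP]
    field_simp
  have key := qint_add' (n-1-(k:ℤ)) ((k:ℤ)+1)
  have hidx : (n-1-(k:ℤ)) + ((k:ℤ)+1) = n := by ring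
  rw [hidx] at key
  rw [e1, e2, e3]
  rw [key]
  field_simp
  ring


noncomputable def S (m : ℤ) (s : ℕ) : RatFunc ℚ :=
  ∑ p ∈ Finset.HasAntidiagonal.antidiagonal s,
      (-1 : RatFunc ℚ) ^ p.2 * q ^ (-(p.2 : ℤ)) * qbinom (m + (p.1 : ℤ)) p.1 * qbinom m p.2

noncomputable def Bsum (m : ℤ) (s : ℕ) : RatFunc ℚ :=
  ∑ p ∈ Finset.HasAntidiagonal.antidiagonal s,
      (-1 : RatFunc ℚ) ^ p.2 * qbinom (m - 1 + (p.1 : ℤ)) p.1 * qbinom m p.2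

lemma pascalA (m : ℤ) (a : ℕ) : qbinom (m + (a:ℤ) + 1) (a+1)
    = q ^ (-((a:ℤ)+1)) * qbinom (m + (a:ℤ)) (a+1) + q ^ m * qbinom (m + (a:ℤ)) a := by
  have h := pascal1 (m + (a:ℤ) + 1) a
  have h1 : m + (a:ℤ) + 1 - 1 = m + (a:ℤ) := by ring
  have h2 : m + (a:ℤ) + 1 - (a:ℤ) - 1 = m := by ring
  rw [h1, h2] at h
  exact h

lemma rec1 (m : ℤ) (s : ℕ) :
    S m (s+1) = q ^ m * S m s + q ^ (-((s:ℤ)+1)) * Bsum m (s+1) := by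
  unfold S Bsum
  rw [Finset.Nat.sum_antidiagonal_succ, Finset.Nat.sum_antidiagonal_succ]
  have hterm : ∀ p ∈ Finset.HasAntidiagonal.antidiagonal s,
      (-1 : RatFunc ℚ) ^ p.2 * q ^ (-(p.2 : ℤ)) * qbinom (m + ((p.1+1 : ℕ):ℤ)) (p.1+1) * qbinom m p.2
      = q ^ m * ((-1 : RatFunc ℚ) ^ p.2 * q ^ (-(p.2 : ℤ)) * qbinom (m + (p.1 : ℤ)) p.1 * qbinom m p.2)
        + q ^ (-((s:ℤ)+1)) * ((-1 : RatFunc ℚ) ^ p.2 * qbinom (m - 1 + ((p.1+1 : ℕ):ℤ)) (p.1+1) * qbinom m p.2) := by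
    rintro ⟨a, b⟩ hp
    simp only [Finset.HasAntidiagonal.mem_antidiagonal] at hp
    simp only
    have hcast : ((a + 1 : ℕ) : ℤ) = (a : ℤ) + 1 := by push_cast; ring
    rw [hcast]
    have hidx : m + ((a:ℤ) + 1) = m + (a:ℤ) + 1 := by ring
    have hidx2 : m - 1 + ((a:ℤ) + 1) = m + (a:ℤ) := by ring
    rw [hidx, hidx2, pascalA]
    have hq2 : q ^ (-(b:ℤ)) * q ^ (-((a:ℤ)+1)) = q ^ (-((s:ℤ)+1)) := by
      rw [← zpow_add₀ q_ne]
      congr 1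
      omega
    linear_combination ((-1 : RatFunc ℚ)^b * qbinom (m + (a:ℤ)) (a+1) * qbinom m b) * hq2
  rw [Finset.sum_congr rfl hterm, Finset.sum_add_distrib, ← Finset.mul_sum, ← Finset.mul_sum]
  rw [qbinom_zero, qbinom_zero]
  push_cast
  ring

lemma rec2 (m : ℤ) (s : ℕ) :
    Bsum m (s+1) = S (m-1) (s+1) - q ^ (m-1) * S (m-1) s := by
  unfold S Bsum
  rw [Finset.Nat.sum_antidiagonal_succ', Finset.Nat.sum_antidiagonal_succ' (n := s)
    (f := fun p => (-1 : RatFunc ℚ) ^ p.2 * q ^ (-(p.2 : ℤ)) * qbinom (m - 1 + (p.1 : ℤ)) p.1 * qbinom (m-1) p.2)]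
  have hterm : ∀ p ∈ Finset.HasAntidiagonal.antidiagonal s,
      (-1 : RatFunc ℚ) ^ (p.2+1) * qbinom (m - 1 + (p.1 : ℤ)) p.1 * qbinom m (p.2+1)
      = ((-1 : RatFunc ℚ) ^ (p.2+1) * q ^ (-((p.2+1 : ℕ) : ℤ)) * qbinom (m - 1 + (p.1 : ℤ)) p.1 * qbinom (m-1) (p.2+1))
        - q ^ (m-1) * ((-1 : RatFunc ℚ) ^ p.2 * q ^ (-(p.2 : ℤ)) * qbinom (m - 1 + (p.1 : ℤ)) p.1 * qbinom (m-1) p.2) := by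
    rintro ⟨a, b⟩ _
    simp only
    rw [pascal1 m b]
    have hc : ((b + 1 : ℕ) : ℤ) = (b:ℤ) + 1 := by push_cast; ring
    rw [hc]
    have hq2 : q ^ (m - (b:ℤ) - 1) = q ^ (m-1) * q ^ (-(b:ℤ)) := by
      rw [← zpow_add₀ q_ne]; congr 1; ring
    rw [hq2, pow_succ]
    ring
  rw [Finset.sum_congr rfl hterm, Finset.sum_sub_distrib, ← Finset.mul_sum]
  simp only [pow_zero, one_mul, qbinom_zero, mul_one, Nat.cast_zero, neg_zero, zpow_zero]
  push_cast
  ring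

lemma qbinom_self (s : ℕ) : qbinom (s : ℤ) s = 1 := by
  unfold qbinom
  rw [div_eq_one_iff_eq (qfact_ne_zero s)]
  unfold qfact
  rw [← Finset.prod_range_reflect]
  apply Finset.prod_congr rfl
  intro j hj
  simp only [Finset.mem_range] at hj
  congr 1
  omega

lemma qbinom_zero_top (b : ℕ) : qbinom 0 (b+1) = 0 := by
  unfold qbinom
  rw [div_eq_zero_iff]
  left
  apply Finset.prod_eq_zero (Finset.mem_range.mpr (Nat.succ_pos b))
  simpa using qint_zero

lemma S_zero (s : ℕ) : S 0 s = 1 := by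
  unfold S
  rw [Finset.sum_eq_single_of_mem ((s, 0) : ℕ × ℕ)]
  · simp [qbinom_zero, qbinom_self]
  · simp [Finset.HasAntidiagonal.mem_antidiagonal]
  · rintro ⟨a, b⟩ hp hne
    simp only [Finset.HasAntidiagonal.mem_antidiagonal] at hp
    have hb : b ≠ 0 := by
      rintro rfl
      exact hne (by simp [← hp])
    obtain ⟨b', rfl⟩ := Nat.exists_eq_succ_of_ne_zero hb
    simp only
    rw [qbinom_zero_top]
    ring

lemma S_main : ∀ (s : ℕ) (m : ℤ), S m s = q ^ (m * (s:ℤ)) := by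
  intro s
  induction s with
  | zero =>
    intro m
    simp [S, qbinom_zero]
  | succ s IH =>
    have key : ∀ m : ℤ, S m (s+1) - q ^ (m * ((s:ℤ)+1)) =
        q ^ (-((s:ℤ)+1)) * (S (m-1) (s+1) - q ^ ((m-1) * ((s:ℤ)+1))) := by
      intro m
      rw [rec1, rec2, IH m, IH (m-1)]
      have e1 : q ^ (m:ℤ) * q ^ (m * (s:ℤ)) = q ^ (m * ((s:ℤ)+1)) := by
        rw [← zpow_add₀ q_ne]; congr 1; ring
      have e2 : q ^ (-((s:ℤ)+1)) * (q ^ (m-1) * q ^ ((m-1) * (s:ℤ)))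
          = q ^ (-((s:ℤ)+1)) * q ^ ((m-1) * ((s:ℤ)+1)) := by
        rw [← zpow_add₀ q_ne, ← zpow_add₀ q_ne, ← zpow_add₀ q_ne]; congr 1; ring
      linear_combination e1 - e2
    suffices h : ∀ m : ℤ, S m (s+1) = q ^ (m * ((s:ℤ)+1)) by
      intro m
      rw [h m]
      norm_cast
    intro m
    induction m using Int.induction_on with
    | zero => rw [S_zero]; norm_num
    | succ k hk =>
      have h := key ((k:ℤ)+1)
      rw [add_sub_cancel_right, hk, sub_self, mul_zero, sub_eq_zero] at h
      exact h
    | pred k hk =>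
      have h := key (-(k:ℤ))
      rw [hk, sub_self] at h
      have hz : q ^ (-((s:ℤ)+1)) ≠ 0 := zpow_ne_zero _ q_ne
      have h2 := (mul_eq_zero.mp h.symm).resolve_left hz
      rw [sub_eq_zero] at h2
      exact h2


/-- Lemma `A`:
`∑_{a+b=s} (−1)^b q^{−b} [m+a choose a]_q [m choose b]_q = q^{m·s}`. -/
theorem lemA (m : ℤ) (s : ℕ) :
    ∑ p ∈ Finset.HasAntidiagonal.antidiagonal s,
      (-1 : RatFunc ℚ) ^ p.2 * q ^ (-(p.2 : ℤ)) * qbinom (m + (p.1 : ℤ)) p.1 * qbinom m p.2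
      = q ^ (m * (s : ℤ)) := S_main s m
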